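/- Let d ≥ 3, let S be a multiset of nonnegative integers with max(S) > 0, and let G be a finite d-regular graph with girth greater than 3·max(S). If for some vertex v̄ of the polygraph G_S the link of v̄ is nonempty and connected, then either 0 ∈ S, or there is a positive element s of S with 2s ∈ S, or S contains three pairwise distinct elements s, s′, s″ with s″ = s + s′. -/

import Mathlib

/-!
Suppose that `a + b ∉ S` for all `a, b ∈ S`. As the girth exceeds `3 · max S`, for a neighbour
`x̄` of `v̄` in `G_S` each coordinate `xᵢ` determines the first edge of the unique geodesic from
`vᵢ` to `xᵢ`. If two neighbours `x̄, ȳ` of `v̄` are adjacent, these first edges agree in every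
coordinate: otherwise the two geodesics together form a geodesic from `xᵢ` to `yᵢ`, so that
`ρ(vᵢ,xᵢ)`, `ρ(vᵢ,yᵢ)` and their sum `ρ(xᵢ,yᵢ)` all lie in `S`. So the first edge at a coordinate
is constant on each component of the link, yet, every vertex of `G` having degree at least two,
moving one coordinate of a neighbour of `v̄` produces neighbours with any two distinct first edges.
-/

open scoped Classical
open Finset Polynomial

noncomputable section

namespace PaperStmt

variable {V : Type}

/-- The degree of a vertex in a finite simple graph. -/
def degR [Fintype V] (G : SimpleGraph V) (v : V) : ℕ :=
  (Finset.univ.filter (fun u => G.Adj v u)).card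

/-- The link of a vertex: the subgraph induced on the neighbor set. -/
def link (G : SimpleGraph V) (v : V) : SimpleGraph (G.neighborSet v) :=
  SimpleGraph.induce (G.neighborSet v) G

/-- `G` is `(a,b)`-regular: `a`-regular, and the link of every vertex is `b`-regular. -/
def IsABRegular [Fintype V] (G : SimpleGraph V) (a b : ℕ) : Prop :=
  (∀ v, degR G v = a) ∧ ∀ v : V, ∀ u : G.neighborSet v, degR (link G v) u = b

/-- The adjacency matrix over `ℝ`. -/
def adjMat [Fintype V] (G : SimpleGraph V) : Matrix V V ℝ :=
  Matrix.of fun u v => if G.Adj u v then (1 : ℝ) else 0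

/-- The eigenvalues of the adjacency matrix (with multiplicity), in decreasing order,
so that `λ_k = (eigList G).getD (k-1) 0`. -/
def eigList [Fintype V] [DecidableEq V] (G : SimpleGraph V) : List ℝ :=
  (((adjMat G).charpoly.roots).sort (· ≤ ·)).reverse

/-- `λ₂(G)`, the second largest adjacency eigenvalue. -/
def lambda2 [Fintype V] [DecidableEq V] (G : SimpleGraph V) : ℝ :=
  (eigList G).getD 1 0

/-- `λ(G) = max_{i ≥ 2} |λ_i(G)|`. -/
def lambdaMax [Fintype V] [DecidableEq V] (G : SimpleGraph V) : ℝ :=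
  (((eigList G).drop 1).map (fun x => |x|)).foldr max 0

/-- `H` is a `δ`-edge expander: every vertex set `U` has at least
`δ · min(|U|, |Uᶜ|)` edges to its complement. -/
def IsEdgeExpander [Fintype V] (H : SimpleGraph V) (δ : ℝ) : Prop :=
  ∀ U : Finset V,
    δ * min (U.card : ℝ) (((Finset.univ \ U).card : ℝ)) ≤
      (((U ×ˢ (Finset.univ \ U)).filter (fun p => H.Adj p.1 p.2)).card : ℝ)

/-- The polygraph `G_S` on `V(G)^m`, `m = |S|`: two tuples are adjacent iff
their multiset of coordinatewise distances equals `S`. -/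
def polygraph (G : SimpleGraph V) (S : Multiset ℕ) :
    SimpleGraph (Fin (Multiset.card S) → V) where
  Adj x y := x ≠ y ∧
    Multiset.map (fun i => G.dist (x i) (y i)) (Finset.univ.val) = S
  symm := by
    constructor
    rintro x y ⟨hne, h⟩
    refine ⟨hne.symm, ?_⟩
    have hfun : (fun i => G.dist (y i) (x i)) = fun i => G.dist (x i) (y i) := by
      funext i; exact SimpleGraph.dist_comm
    rw [hfun]; exact h
  loopless := by constructor; rintro x ⟨h, -⟩; exact h rfl

/-- The number of vertices at distance `l` from a fixed vertex of the `d`-regular tree. -/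
def Nd (d l : ℕ) : ℕ := if l = 0 then 1 else d * (d - 1) ^ (l - 1)

/-- The multinomial coefficient `m!/(m₁!⋯m_k!)` attached to a multiset `S` of size `m`
whose distinct values have multiplicities `m₁,…,m_k`. -/
def multinom (S : Multiset ℕ) : ℕ :=
  (Multiset.card S).factorial / ∏ x ∈ S.toFinset, (S.count x).factorial

/-- The Geronimus polynomials (as functions), for parameter `d`. -/
def geronimus (d : ℕ) : ℕ → ℝ → ℝ
  | 0 => fun _ => 1
  | 1 => fun x => x
  | 2 => fun x => x ^ 2 - d
  | (t + 3) => fun x => x * geronimus d (t + 2) x - ((d : ℝ) - 1) * geronimus d (t + 1) x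

/-- The graph on `L` where two distinct vertices are adjacent iff they have a
common neighbor in `H`. -/
def commonNbrGraph {W : Type} (H : SimpleGraph W) (L : Set W) : SimpleGraph L where
  Adj x y := x ≠ y ∧ ∃ w : W, H.Adj x w ∧ H.Adj y w
  symm := by constructor; rintro x y ⟨hne, w, h1, h2⟩; exact ⟨hne.symm, w, h2, h1⟩
  loopless := by constructor; rintro x ⟨h, -⟩; exact h rfl

/-- `w : ℕ → V` describes a non-backtracking walk of length `t` in `G`
(only the values `w 0, …, w t` matter). -/
def IsNBWalk (G : SimpleGraph V) (t : ℕ) (w : ℕ → V) : Prop :=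
  (∀ i < t, G.Adj (w i) (w (i + 1))) ∧ ∀ i, 0 < i → i < t → w (i + 1) ≠ w (i - 1)

/-- The graph `H_t` on `V(G)` where distinct `u, v` are adjacent iff there is a
non-backtracking walk of length `t` from `u` to `v` in `G`. -/
def ntWalkGraph (G : SimpleGraph V) (t : ℕ) : SimpleGraph V :=
  SimpleGraph.fromRel (fun u v => ∃ w : ℕ → V, w 0 = u ∧ w t = v ∧ IsNBWalk G t w)

/-- The auxiliary graph on the edges of `H`: two distinct edges are adjacent iff
their union spans a triangle of `H`. -/
def auxGraph {X : Type} (H : SimpleGraph X) : SimpleGraph H.edgeSet where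
  Adj e f := e ≠ f ∧ ∃ x y z : X, H.Adj x y ∧ H.Adj x z ∧ H.Adj y z ∧
      ((e : Sym2 X) = s(x, y) ∨ (e : Sym2 X) = s(x, z) ∨ (e : Sym2 X) = s(y, z)) ∧
      ((f : Sym2 X) = s(x, y) ∨ (f : Sym2 X) = s(x, z) ∨ (f : Sym2 X) = s(y, z))
  symm := by
    constructor
    rintro e f ⟨hne, x, y, z, h1, h2, h3, he, hf⟩
    exact ⟨hne.symm, x, y, z, h1, h2, h3, hf, he⟩
  loopless := by constructor; rintro e ⟨h, -⟩; exact h rfl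

/-- The ordered triangles of a finite graph. -/
def triangleFinset {X : Type} [Fintype X] (H : SimpleGraph X) : Finset (X × X × X) :=
  Finset.univ.filter (fun t => H.Adj t.1 t.2.1 ∧ H.Adj t.1 t.2.2 ∧ H.Adj t.2.1 t.2.2)

/-- The complete tripartite graph `K_{d,d,d}`. -/
def tripartite (d : ℕ) : SimpleGraph (Fin 3 × Fin d) where
  Adj u v := u.1 ≠ v.1
  symm := ⟨fun _ _ h => Ne.symm h⟩
  loopless := ⟨fun _ h => h rfl⟩

open SimpleGraph

section Geodesics

variable {G : SimpleGraph V}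

lemma path_eq_of_length_add_lt_egirth {u w : V} {p q : G.Walk u w} (hp : p.IsPath)
    (hq : q.IsPath) (h : ((p.length + q.length : ℕ) : ℕ∞) < G.egirth) : p = q := by
  by_contra hne
  obtain ⟨_, _, _, c, hc, hlen⟩ := hp.exists_isCycle_length_le_add_of_ne hq hne
  exact (egirth_le_length hc).not_gt (lt_of_le_of_lt (by exact_mod_cast hlen) h)

/-- `x` is a neighbour of `v` on some shortest path from `v` to `u`. -/
def IsTowards (G : SimpleGraph V) (v x u : V) : Prop :=
  G.Adj v x ∧ G.dist x u + 1 = G.dist v u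

lemma exists_isTowards {v u : V} (h : 0 < G.dist v u) : ∃ x, IsTowards G v x u := by
  obtain ⟨p, -, hp⟩ := (Reachable.of_dist_ne_zero h.ne').exists_path_of_dist
  have hnil : ¬p.Nil := fun hn => by simp [← hp, hn.length_eq_zero] at h
  refine ⟨p.snd, p.adj_snd hnil, le_antisymm ?_ ?_⟩
  · have := dist_le p.tail
    have := p.length_tail_add_one hnil
    omega
  · have := (p.adj_snd hnil).reachable.dist_triangle_left u
    rw [dist_eq_one_iff_adj.mpr (p.adj_snd hnil)] at this
    omega

lemma IsTowards.reachable {v x u : V} (h : IsTowards G v x u) : G.Reachable x u :=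
  h.1.reachable.symm.trans (Reachable.of_dist_ne_zero (by have := h.2; omega))

lemma IsTowards.exists_path {v x u : V} (h : IsTowards G v x u) :
    ∃ p : G.Walk v u, p.IsPath ∧ p.length = G.dist v u ∧ p.snd = x := by
  obtain ⟨q, hq⟩ := h.reachable.exists_walk_length_eq_dist
  have hlen : (Walk.cons h.1 q).length = G.dist v u := by rw [Walk.length_cons, hq, h.2]
  exact ⟨_, Walk.isPath_of_length_eq_dist _ hlen, hlen, Walk.snd_cons q h.1⟩

/-- Below the girth, geodesics leaving `v` in different directions only meet at `v`, so their
union is again a geodesic. -/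
lemma IsTowards.dist_eq_add_of_ne {v x y u w : V} (hx : IsTowards G v x u)
    (hy : IsTowards G v y w) (hxy : x ≠ y)
    (hg : ((G.dist v u + G.dist v w + G.dist u w : ℕ) : ℕ∞) < G.egirth) :
    G.dist u w = G.dist v u + G.dist v w := by
  obtain ⟨P, hP, hPlen, rfl⟩ := hx.exists_path
  obtain ⟨Q, hQ, hQlen, rfl⟩ := hy.exists_path
  have hmeet : ∀ z ∈ P.support, z ∈ Q.support → z = v := by
    intro z hzP hzQ
    by_contra hzv
    refine hxy ?_
    rw [← Walk.snd_takeUntil hzv P hzP, ← Walk.snd_takeUntil hzv Q hzQ,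
      path_eq_of_length_add_lt_egirth (hP.takeUntil hzP) (hQ.takeUntil hzQ)
        (lt_of_le_of_lt ?_ hg)]
    have := Walk.length_takeUntil_le_length P hzP
    have := Walk.length_takeUntil_le_length Q hzQ
    exact_mod_cast (by omega)
  have hT : (P.reverse.append Q).IsPath := by
    have hQv := hQ.support_nodup
    rw [← Walk.cons_tail_support Q, List.nodup_cons] at hQv
    rw [Walk.isPath_def, Walk.support_append, Walk.support_reverse, List.nodup_append]
    refine ⟨List.nodup_reverse.mpr hP.support_nodup, hQv.2, fun a ha b hb hab => ?_⟩
    subst hab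
    exact hQv.1 (hmeet a (List.mem_reverse.mp ha) (List.mem_of_mem_tail hb) ▸ hb)
  obtain ⟨R, hR, hRlen⟩ := Reachable.exists_path_of_dist ⟨P.reverse.append Q⟩
  have hRT := path_eq_of_length_add_lt_egirth hR hT
    (by rwa [Walk.length_append, Walk.length_reverse, hRlen, hPlen, hQlen, add_comm])
  rw [← hRlen, hRT, Walk.length_append, Walk.length_reverse, hPlen, hQlen]

lemma IsTowards.unique {v x y u : V} (hx : IsTowards G v x u) (hy : IsTowards G v y u)
    (hg : ((2 * G.dist v u : ℕ) : ℕ∞) < G.egirth) : x = y := by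
  by_contra hxy
  have := hx.dist_eq_add_of_ne hy hxy (by simpa [two_mul] using hg)
  have := hx.2
  simp only [dist_self] at *
  omega

/-- Extend a geodesic by any edge other than the one leading back: by
`IsTowards.dist_eq_add_of_ne` at its endpoint, the result is again a geodesic. -/
lemma exists_dist_eq_isTowards (hdeg : ∀ w, (G.neighborSet w).Nontrivial) {v x : V}
    (hvx : G.Adj v x) {k : ℕ} (hk : 0 < k) (hg : ((2 * k : ℕ) : ℕ∞) < G.egirth) :
    ∃ u, G.dist v u = k ∧ IsTowards G v x u := by
  induction k, hk using Nat.le_induction with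
  | base => exact ⟨x, dist_eq_one_iff_adj.mpr hvx, hvx, by simp [dist_eq_one_iff_adj.mpr hvx]⟩
  | succ k hk ih =>
    obtain ⟨u, hvu, hxu⟩ := ih (lt_of_le_of_lt (by gcongr; omega) hg)
    have huv : G.dist u v = k := by rw [SimpleGraph.dist_comm]; exact hvu
    obtain ⟨y, hy⟩ := exists_isTowards (G := G) (by omega : 0 < G.dist u v)
    obtain ⟨z, huz, hzy⟩ := (hdeg u).exists_ne y
    have huz' : G.dist u z = 1 := dist_eq_one_iff_adj.mpr huz
    have hz : IsTowards G u z z := ⟨huz, by simp [huz']⟩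
    have hvz_le : G.dist v z ≤ k + 1 := by
      have := (Reachable.of_dist_ne_zero (by omega : G.dist v u ≠ 0)).dist_triangle_left z
      omega
    have hvz : G.dist v z = k + 1 := by
      have := hy.dist_eq_add_of_ne hz (Ne.symm hzy)
        (lt_of_le_of_lt (by rw [huv, huz']; gcongr; omega) hg)
      rwa [huv, huz'] at this
    refine ⟨z, hvz, hxu.1, ?_⟩
    have hxz_le := hxu.reachable.dist_triangle_left z
    have hvz_le' := hvx.reachable.dist_triangle_left z
    rw [dist_eq_one_iff_adj.mpr hvx] at hvz_le'
    have := hxu.2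
    omega

end Geodesics

lemma neighborSet_nontrivial_of_one_lt_degR [Fintype V] {G : SimpleGraph V} {w : V}
    (h : 1 < degR G w) : (G.neighborSet w).Nontrivial := by
  obtain ⟨a, ha, b, hb, hab⟩ := Finset.one_lt_card.mp h
  exact ⟨a, (Finset.mem_filter.mp ha).2, b, (Finset.mem_filter.mp hb).2, hab⟩

lemma zero_mem_or_two_mul_mem_or_add_mem {S : Multiset ℕ} {a b : ℕ} (ha : a ∈ S) (hb : b ∈ S)
    (hab : a + b ∈ S) :
    0 ∈ S ∨ (∃ s ∈ S, 0 < s ∧ 2 * s ∈ S) ∨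
      (∃ s s' s'' : ℕ, s ∈ S ∧ s' ∈ S ∧ s'' ∈ S ∧
        s ≠ s' ∧ s ≠ s'' ∧ s' ≠ s'' ∧ s'' = s + s') := by
  rcases Nat.eq_zero_or_pos a with rfl | ha0
  · exact Or.inl ha
  rcases Nat.eq_zero_or_pos b with rfl | hb0
  · exact Or.inl hb
  rcases eq_or_ne a b with rfl | hne
  · exact Or.inr (Or.inl ⟨a, ha, ha0, by rwa [two_mul]⟩)
  · exact Or.inr (Or.inr ⟨a, b, a + b, ha, hb, hab, hne, by omega, by omega, rfl⟩)

section Polygraph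

variable {G : SimpleGraph V} {S : Multiset ℕ} {v x y : Fin (Multiset.card S) → V}

lemma polygraph_adj_dist_mem (h : (polygraph G S).Adj x y) (i : Fin (Multiset.card S)) :
    G.dist (x i) (y i) ∈ S := by
  rw [← h.2]
  exact Multiset.mem_map_of_mem _ (Finset.mem_univ i)

lemma polygraph_adj_dist_pos (h0 : 0 ∉ S) (h : (polygraph G S).Adj x y)
    (i : Fin (Multiset.card S)) : 0 < G.dist (x i) (y i) :=
  Nat.pos_of_ne_zero fun h' => h0 (h' ▸ polygraph_adj_dist_mem h i)

lemma polygraph_adj_of_dist_eq (h0 : 0 ∉ S) (hx : (polygraph G S).Adj v x)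
    (hdist : ∀ i, G.dist (v i) (y i) = G.dist (v i) (x i)) : (polygraph G S).Adj v y := by
  refine ⟨?_, by simpa only [hdist] using hx.2⟩
  rintro rfl
  obtain ⟨i, -⟩ := Function.ne_iff.mp hx.1
  exact h0 (by simpa [← hdist i] using polygraph_adj_dist_mem hx i)

/-- Move coordinate `i` of a given neighbour to a vertex at the same distance in the prescribed
direction. -/
lemma exists_polygraph_adj_isTowards (hdeg : ∀ w, (G.neighborSet w).Nontrivial) (h0 : 0 ∉ S)
    (hg : ((2 * S.sup : ℕ) : ℕ∞) < G.egirth) (hx : (polygraph G S).Adj v x)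
    (i : Fin (Multiset.card S)) {p : V} (hp : G.Adj (v i) p) :
    ∃ y, (polygraph G S).Adj v y ∧ IsTowards G (v i) p (y i) := by
  obtain ⟨w, hw, hpw⟩ := exists_dist_eq_isTowards hdeg hp (polygraph_adj_dist_pos h0 hx i)
    (lt_of_le_of_lt (by gcongr; exact Multiset.le_sup (polygraph_adj_dist_mem hx i)) hg)
  refine ⟨Function.update x i w, polygraph_adj_of_dist_eq h0 hx fun j => ?_, by simpa using hpw⟩
  rcases eq_or_ne j i with rfl | hj
  · simpa using hw
  · rw [Function.update_of_ne hj]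

/-- Otherwise the three distances `a`, `b`, `a + b` at coordinate `i` all lie in `S`. -/
lemma IsTowards.of_polygraph_adj (hfree : ∀ a ∈ S, ∀ b ∈ S, a + b ∉ S)
    (hg : ((3 * S.sup : ℕ) : ℕ∞) < G.egirth) (hx : (polygraph G S).Adj v x)
    (hy : (polygraph G S).Adj v y) (hxy : (polygraph G S).Adj x y) {i : Fin (Multiset.card S)}
    {p : V} (hp : IsTowards G (v i) p (x i)) : IsTowards G (v i) p (y i) := by
  have ha := polygraph_adj_dist_mem hx i
  have hb := polygraph_adj_dist_mem hy i
  have hc := polygraph_adj_dist_mem hxy i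
  obtain ⟨q, hq⟩ := exists_isTowards (polygraph_adj_dist_pos (fun h => hfree 0 h 0 h h) hy i)
  obtain rfl : p = q := by
    by_contra hpq
    refine hfree _ ha _ hb (hp.dist_eq_add_of_ne hq hpq (lt_of_le_of_lt ?_ hg) ▸ hc)
    have := Multiset.le_sup ha
    have := Multiset.le_sup hb
    have := Multiset.le_sup hc
    exact_mod_cast (by omega)
  exact hq

lemma IsTowards.of_link_polygraph_reachable (hfree : ∀ a ∈ S, ∀ b ∈ S, a + b ∉ S)
    (hg : ((3 * S.sup : ℕ) : ℕ∞) < G.egirth) {a b : (polygraph G S).neighborSet v}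
    (hab : (link (polygraph G S) v).Reachable a b) {i : Fin (Multiset.card S)} {p : V}
    (ha : IsTowards G (v i) p (a.1 i)) : IsTowards G (v i) p (b.1 i) := by
  obtain ⟨w⟩ := hab
  induction w with
  | nil => exact ha
  | @cons a c _ hac _ ih => exact ih (ha.of_polygraph_adj hfree hg a.2 c.2 hac)

theorem not_connected_link_polygraph (hdeg : ∀ w, (G.neighborSet w).Nontrivial)
    (hg : ((3 * S.sup : ℕ) : ℕ∞) < G.egirth) (hfree : ∀ a ∈ S, ∀ b ∈ S, a + b ∉ S)
    (hne : ((polygraph G S).neighborSet v).Nonempty) :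
    ¬(link (polygraph G S) v).Connected := by
  intro hconn
  have h0 : 0 ∉ S := fun h => hfree 0 h 0 h h
  have hg2 : ((2 * S.sup : ℕ) : ℕ∞) < G.egirth := lt_of_le_of_lt (by gcongr; omega) hg
  obtain ⟨x, hx⟩ := hne
  obtain ⟨i, -⟩ := Function.ne_iff.mp hx.1
  obtain ⟨p, hp, q, hq, hpq⟩ := hdeg (v i)
  obtain ⟨y, hy, hyp⟩ := exists_polygraph_adj_isTowards hdeg h0 hg2 hx i hp
  obtain ⟨z, hz, hzq⟩ := exists_polygraph_adj_isTowards hdeg h0 hg2 hx i hq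
  have hzp : IsTowards G (v i) p (z i) :=
    hyp.of_link_polygraph_reachable hfree hg (hconn.preconnected ⟨y, hy⟩ ⟨z, hz⟩)
  have hzi := Multiset.le_sup (polygraph_adj_dist_mem hz i)
  exact hpq (hzp.unique hzq (lt_of_le_of_lt (by gcongr) hg2))

end Polygraph

theorem statement12_general (d : ℕ) (hd : 3 ≤ d) (S : Multiset ℕ)
    {V : Type} [Fintype V] (G : SimpleGraph V)
    (hreg : ∀ v, degR G v = d)
    (hgirth : ((3 * S.sup : ℕ) : ℕ∞) < G.egirth)
    (v : Fin (Multiset.card S) → V)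
    (hne : ((polygraph G S).neighborSet v).Nonempty)
    (hconn : (link (polygraph G S) v).Connected) :
    0 ∈ S ∨ (∃ s ∈ S, 0 < s ∧ 2 * s ∈ S) ∨
      (∃ s s' s'' : ℕ, s ∈ S ∧ s' ∈ S ∧ s'' ∈ S ∧
        s ≠ s' ∧ s ≠ s'' ∧ s' ≠ s'' ∧ s'' = s + s') := by
  by_contra hcon
  have hfree : ∀ a ∈ S, ∀ b ∈ S, a + b ∉ S := fun a ha b hb hab =>
    hcon (zero_mem_or_two_mul_mem_or_add_mem ha hb hab)
  have hdeg : ∀ w, (G.neighborSet w).Nontrivial := fun w =>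
    neighborSet_nontrivial_of_one_lt_degR (by rw [hreg]; omega)
  exact not_connected_link_polygraph hdeg hgirth hfree hne hconn

theorem statement12 (d : ℕ) (hd : 3 ≤ d) (S : Multiset ℕ) (hS : 0 < S.sup)
    {V : Type} [Fintype V] (G : SimpleGraph V)
    (hreg : ∀ v, degR G v = d)
    (hgirth : ((3 * S.sup : ℕ) : ℕ∞) < G.egirth)
    (v : Fin (Multiset.card S) → V)
    (hne : ((polygraph G S).neighborSet v).Nonempty)
    (hconn : (link (polygraph G S) v).Connected) :
    0 ∈ S ∨ (∃ s ∈ S, 0 < s ∧ 2 * s ∈ S) ∨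
      (∃ s s' s'' : ℕ, s ∈ S ∧ s' ∈ S ∧ s'' ∈ S ∧
        s ≠ s' ∧ s ≠ s'' ∧ s' ≠ s'' ∧ s'' = s + s') :=
  statement12_general d hd S G hreg hgirth v hne hconn

end PaperStmt
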